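/- arXiv:2401.05191 — 2 statements merged into one kernel-verified Lean document; each statement's English description precedes it below -/
import Mathlib

section
/- Let I be a finite index set, and for each i in a subset S ⊆ I let r(i) ≥ 1 be a positive integer rank with r(i) = 1 + |{ j ∈ I \ {i} : x_j > x_i }| for real scores (x_j)_{j∈I}. Then ∑_{i∈S} 1/log₂(1 + r(i)) ≥ ∑_{i∈S} 1 / (1 + ∑_{j∈I\{i}} exp(x_j - x_i)). -/
theorem dcg_lower_bound {ι : Type*} [DecidableEq ι]
    (I S : Finset ι) (hS : S ⊆ I) (x : ι → ℝ) (r : ι → ℕ)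
    (hr : ∀ i ∈ S, r i = 1 + ((I.erase i).filter (fun j => x j > x i)).card) :
    ∑ i ∈ S, 1 / Real.logb 2 (1 + (r i : ℝ)) ≥
      ∑ i ∈ S, 1 / (1 + ∑ j ∈ I.erase i, Real.exp (x j - x i)) := by
  apply Finset.sum_le_sum
  intro i hi
  have hrS := hr i hi
  have hn : 1 ≤ r i := by omega
  have hcard : (((I.erase i).filter (fun j => x j > x i)).card : ℝ)
      ≤ ∑ j ∈ I.erase i, Real.exp (x j - x i) := by
    rw [Finset.card_filter]
    push_cast
    apply Finset.sum_le_sum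
    intro j _
    by_cases h : x j > x i
    · simp only [h, if_true]
      have h0 : (0:ℝ) ≤ x j - x i := by linarith
      calc (1:ℝ) = Real.exp 0 := (Real.exp_zero).symm
        _ ≤ Real.exp (x j - x i) := Real.exp_le_exp.mpr h0
    · simp only [h, if_false]
      exact (Real.exp_pos _).le
  have hsum_nonneg : (0:ℝ) ≤ ∑ j ∈ I.erase i, Real.exp (x j - x i) :=
    Finset.sum_nonneg fun j _ => (Real.exp_pos _).le
  have hden_pos : (0:ℝ) < 1 + ∑ j ∈ I.erase i, Real.exp (x j - x i) := by linarith
  have hrle : (r i : ℝ) ≤ 1 + ∑ j ∈ I.erase i, Real.exp (x j - x i) := by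
    rw [hrS]; push_cast; linarith
  have hlog_pos : 0 < Real.logb 2 (1 + (r i : ℝ)) := by
    apply Real.logb_pos (by norm_num)
    have : (1:ℝ) ≤ (r i : ℝ) := by exact_mod_cast hn
    linarith
  have hlog_le : Real.logb 2 (1 + (r i : ℝ)) ≤ (r i : ℝ) := by
    have h2 : (1 + (r i : ℝ)) ≤ 2 ^ (r i) := by
      have h3 := Nat.lt_two_pow_self (n := r i)
      have h4 : (1 + r i : ℕ) ≤ 2 ^ (r i) := by omega
      exact_mod_cast h4
    have hstep : Real.logb 2 (1 + (r i : ℝ)) ≤ Real.logb 2 ((2:ℝ) ^ (r i)) := by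
      gcongr
      norm_num
    have hEq : Real.logb 2 ((2:ℝ) ^ (r i)) = (r i : ℝ) := by
      rw [Real.logb_pow, Real.logb_self_eq_one] <;> norm_num
    linarith
  have hr_pos : (0:ℝ) < r i := by exact_mod_cast hn
  calc 1 / (1 + ∑ j ∈ I.erase i, Real.exp (x j - x i))
      ≤ 1 / (r i : ℝ) := one_div_le_one_div_of_le hr_pos hrle
    _ ≤ 1 / Real.logb 2 (1 + (r i : ℝ)) :=
        one_div_le_one_div_of_le hlog_pos hlog_le
end

section
/- Let I be a finite index set, S ⊆ I nonempty, and (x_j)_{j∈I} real scores. Define DCG = ∑_{i∈S} 1/log₂(1 + r(i)) with r(i) = 1 + |{ j ∈ I\{i} : x_j > x_i }|, and IDCG = ∑_{i=1}^{|S|} 1/log₂(1 + i). Then DCG/IDCG ≥ (1/|S|) · ∑_{i∈S} 1 / (1 + ∑_{j∈I\{i}} exp(x_j - x_i)). -/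
theorem ndcg_lower_bound {ι : Type*} [DecidableEq ι]
    (I S : Finset ι) (hS : S ⊆ I) (hSne : S.Nonempty) (x : ι → ℝ) (r : ι → ℕ)
    (hr : ∀ i ∈ S, r i = 1 + ((I.erase i).filter (fun j => x j > x i)).card) :
    (∑ i ∈ S, 1 / Real.logb 2 (1 + (r i : ℝ))) /
        (∑ i ∈ Finset.Icc 1 S.card, 1 / Real.logb 2 (1 + (i : ℝ))) ≥
      (1 / (S.card : ℝ)) *
        ∑ i ∈ S, 1 / (1 + ∑ j ∈ I.erase i, Real.exp (x j - x i)) := by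
  set D := ∑ i ∈ S, 1 / Real.logb 2 (1 + (r i : ℝ)) with hD
  set T := ∑ i ∈ Finset.Icc 1 S.card, 1 / Real.logb 2 (1 + (i : ℝ)) with hT
  set B := ∑ i ∈ S, 1 / (1 + ∑ j ∈ I.erase i, Real.exp (x j - x i)) with hB
  have hNpos : (0 : ℝ) < S.card := by
    exact_mod_cast Finset.card_pos.mpr hSne
  -- termwise positivity of denominators
  have hden : ∀ i ∈ S, (0:ℝ) < 1 + ∑ j ∈ I.erase i, Real.exp (x j - x i) := by
    intro i hi
    have : 0 ≤ ∑ j ∈ I.erase i, Real.exp (x j - x i) :=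
      Finset.sum_nonneg fun j _ => (Real.exp_pos _).le
    linarith
  have hB0 : 0 ≤ B := Finset.sum_nonneg fun i hi => by positivity
  -- B ≤ D termwise
  have hBD : B ≤ D := by
    apply Finset.sum_le_sum
    intro i hi
    have hr1 : 1 ≤ r i := by rw [hr i hi]; omega
    have hlogpos : 0 < Real.logb 2 (1 + (r i : ℝ)) := by
      apply Real.logb_pos (by norm_num)
      have : (1:ℝ) ≤ (r i : ℝ) := by exact_mod_cast hr1
      linarith
    have hlog_le_r : Real.logb 2 (1 + (r i : ℝ)) ≤ (r i : ℝ) := by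
      rw [Real.logb_le_iff_le_rpow (by norm_num) (by positivity)]
      rw [Real.rpow_natCast]
      have := Nat.lt_two_pow_self (n := r i)
      have : (r i : ℝ) + 1 ≤ (2 ^ r i : ℕ) := by exact_mod_cast this
      push_cast at this ⊢
      linarith
    have hr_le : (r i : ℝ) ≤ 1 + ∑ j ∈ I.erase i, Real.exp (x j - x i) := by
      rw [hr i hi]
      push_cast
      have h1 : (((I.erase i).filter (fun j => x j > x i)).card : ℝ)
          ≤ ∑ j ∈ I.erase i, Real.exp (x j - x i) := by
        calc (((I.erase i).filter (fun j => x j > x i)).card : ℝ)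
            = ∑ j ∈ (I.erase i).filter (fun j => x j > x i), (1:ℝ) := by
              simp
          _ ≤ ∑ j ∈ (I.erase i).filter (fun j => x j > x i), Real.exp (x j - x i) := by
              apply Finset.sum_le_sum
              intro j hj
              have hj' := (Finset.mem_filter.mp hj).2
              have : 0 < x j - x i := by linarith
              calc (1:ℝ) = Real.exp 0 := by simp
                _ ≤ Real.exp (x j - x i) := Real.exp_le_exp.mpr this.le
          _ ≤ ∑ j ∈ I.erase i, Real.exp (x j - x i) := by
              apply Finset.sum_le_sum_of_subset_of_nonneg (Finset.filter_subset _ _)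
              intro j _ _; exact (Real.exp_pos _).le
      linarith
    exact one_div_le_one_div_of_le hlogpos (le_trans hlog_le_r hr_le)
  have hD0 : 0 ≤ D := le_trans hB0 hBD
  -- T positive
  have hT0 : 0 < T := by
    apply Finset.sum_pos
    · intro i hi
      have hi1 : 1 ≤ i := (Finset.mem_Icc.mp hi).1
      have : 0 < Real.logb 2 (1 + (i:ℝ)) := by
        apply Real.logb_pos (by norm_num)
        have : (1:ℝ) ≤ (i:ℝ) := by exact_mod_cast hi1
        linarith
      positivity
    · exact ⟨1, Finset.mem_Icc.mpr ⟨le_refl 1, Finset.card_pos.mpr hSne⟩⟩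
  -- T ≤ card
  have hTN : T ≤ (S.card : ℝ) := by
    calc T ≤ ∑ i ∈ Finset.Icc 1 S.card, (1:ℝ) := by
          apply Finset.sum_le_sum
          intro i hi
          have hi1 : 1 ≤ i := (Finset.mem_Icc.mp hi).1
          have hlog : 1 ≤ Real.logb 2 (1 + (i:ℝ)) := by
            have h2 : (2:ℝ) ≤ 1 + (i:ℝ) := by
              have : (1:ℝ) ≤ (i:ℝ) := by exact_mod_cast hi1
              linarith
            calc (1:ℝ) = Real.logb 2 2 := (Real.logb_self_eq_one (by norm_num)).symm
              _ ≤ Real.logb 2 (1 + (i:ℝ)) := Real.logb_le_logb_of_le (by norm_num) (by norm_num) h2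
          rw [div_le_one (by linarith)]
          exact hlog
      _ = (S.card : ℝ) := by
          simp [Nat.card_Icc]
  calc (1 / (S.card:ℝ)) * B = B / (S.card:ℝ) := by ring
    _ ≤ D / (S.card:ℝ) := by gcongr
    _ ≤ D / T := by gcongr
end
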